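/- None of the following three presented groups admits a surjective group homomorphism onto the additive group ℤ/12ℤ: ⟨a, b, c | abc = 1, a³ = 1, b⁴ = c⁴ = 1⟩; ⟨a, b, c | abc = 1, a² = 1, b⁶ = c⁶ = 1⟩; ⟨a, b, c, d | abcd = 1, a² = b² = c² = 1, d³ = 1⟩. -/
import Mathlib


/-- Relations for `⟨a,b,c ∣ abc = 1, a³ = 1, b⁴ = c⁴ = 1⟩`, the orbifold
fundamental group of `S²(3,4,4)`.  Generators: `a = 0`, `b = 1`, `c = 2`. -/
def relsS344 : Set (FreeGroup (Fin 3)) :=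
  {FreeGroup.of 0 * FreeGroup.of 1 * FreeGroup.of 2,
    (FreeGroup.of 0) ^ 3, (FreeGroup.of 1) ^ 4, (FreeGroup.of 2) ^ 4}

/-- Relations for `⟨a,b,c ∣ abc = 1, a² = 1, b⁶ = c⁶ = 1⟩`, the orbifold
fundamental group of `S²(2,6,6)`.  Generators: `a = 0`, `b = 1`, `c = 2`. -/
def relsS266 : Set (FreeGroup (Fin 3)) :=
  {FreeGroup.of 0 * FreeGroup.of 1 * FreeGroup.of 2,
    (FreeGroup.of 0) ^ 2, (FreeGroup.of 1) ^ 6, (FreeGroup.of 2) ^ 6}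

/-- Relations for `⟨a,b,c,d ∣ abcd = 1, a² = b² = c² = 1, d³ = 1⟩`, the
orbifold fundamental group of `S²(2,2,2,3)`.  Generators: `a = 0`, `b = 1`,
`c = 2`, `d = 3`. -/
def relsS2223 : Set (FreeGroup (Fin 4)) :=
  {FreeGroup.of 0 * FreeGroup.of 1 * FreeGroup.of 2 * FreeGroup.of 3,
    (FreeGroup.of 0) ^ 2, (FreeGroup.of 1) ^ 2, (FreeGroup.of 2) ^ 2,
    (FreeGroup.of 3) ^ 3}

lemma mk_rel_eq_one {α : Type*} {rels : Set (FreeGroup α)} {r : FreeGroup α} (hr : r ∈ rels) :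
    PresentedGroup.mk rels r = 1 :=
  (QuotientGroup.eq_one_iff _).2 (Subgroup.subset_normalClosure hr)

/-- The multiplicative version of reduction `ZMod 12 → ZMod k`. -/
def castM (k : ℕ) [NeZero k] (h : k ∣ 12) :
    Multiplicative (ZMod 12) →* Multiplicative (ZMod k) :=
  AddMonoidHom.toMultiplicative (ZMod.castHom h (ZMod k)).toAddMonoidHom

/-- None of the groups `⟨a,b,c ∣ abc = 1, a³ = 1, b⁴ = c⁴ = 1⟩`,
`⟨a,b,c ∣ abc = 1, a² = 1, b⁶ = c⁶ = 1⟩`,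
`⟨a,b,c,d ∣ abcd = 1, a² = b² = c² = 1, d³ = 1⟩` admits a surjective
homomorphism onto `ℤ/12ℤ`. -/
theorem no_surjective_hom_onto_Z12 :
    (∀ φ : PresentedGroup relsS344 →* Multiplicative (ZMod 12),
      ¬ Function.Surjective φ) ∧
    (∀ φ : PresentedGroup relsS266 →* Multiplicative (ZMod 12),
      ¬ Function.Surjective φ) ∧
    (∀ φ : PresentedGroup relsS2223 →* Multiplicative (ZMod 12),
      ¬ Function.Surjective φ) := by
  refine ⟨?_, ?_, ?_⟩
  · intro φ hφ
    set F := φ.comp (PresentedGroup.mk relsS344) with hFdef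
    set ψ := castM 3 (by norm_num)
    have h1 : F (FreeGroup.of 0 * FreeGroup.of 1 * FreeGroup.of 2) = 1 := by
      simp [hFdef, mk_rel_eq_one (show _ ∈ relsS344 by left; rfl)]
    have h2 : F ((FreeGroup.of 0) ^ 3) = 1 := by
      simp [hFdef, mk_rel_eq_one (show _ ∈ relsS344 by right; left; rfl)]
    have h3 : F ((FreeGroup.of 1) ^ 4) = 1 := by
      simp [hFdef, mk_rel_eq_one (show _ ∈ relsS344 by right; right; left; rfl)]
    have h4 : F ((FreeGroup.of 2) ^ 4) = 1 := by
      simp [hFdef, mk_rel_eq_one (show _ ∈ relsS344 by right; right; right; rfl)]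
    rw [map_mul, map_mul] at h1
    rw [map_pow] at h2 h3 h4
    have key : ∀ x y z : Multiplicative (ZMod 12),
        x * y * z = 1 → x ^ 3 = 1 → y ^ 4 = 1 → z ^ 4 = 1 →
        ψ x = 1 ∧ ψ y = 1 ∧ ψ z = 1 := by decide
    obtain ⟨k1, k2, k3⟩ := key _ _ _ h1 h2 h3 h4
    have hG : ψ.comp F = 1 := by
      apply FreeGroup.ext_hom
      intro a
      fin_cases a <;> simpa using ‹_›
    have hψ : Function.Surjective ψ := by decide
    have hs : Function.Surjective (ψ.comp F) :=
      (hψ.comp hφ).comp (PresentedGroup.mk_surjective _)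
    obtain ⟨x, hx⟩ := hs (Multiplicative.ofAdd 1)
    rw [hG] at hx
    simp only [MonoidHom.one_apply] at hx
    exact absurd hx (by decide)
  · intro φ hφ
    set F := φ.comp (PresentedGroup.mk relsS266) with hFdef
    set ψ := castM 2 (by norm_num)
    have h1 : F (FreeGroup.of 0 * FreeGroup.of 1 * FreeGroup.of 2) = 1 := by
      simp [hFdef, mk_rel_eq_one (show _ ∈ relsS266 by left; rfl)]
    have h2 : F ((FreeGroup.of 0) ^ 2) = 1 := by
      simp [hFdef, mk_rel_eq_one (show _ ∈ relsS266 by right; left; rfl)]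
    have h3 : F ((FreeGroup.of 1) ^ 6) = 1 := by
      simp [hFdef, mk_rel_eq_one (show _ ∈ relsS266 by right; right; left; rfl)]
    have h4 : F ((FreeGroup.of 2) ^ 6) = 1 := by
      simp [hFdef, mk_rel_eq_one (show _ ∈ relsS266 by right; right; right; rfl)]
    rw [map_mul, map_mul] at h1
    rw [map_pow] at h2 h3 h4
    have key : ∀ x y z : Multiplicative (ZMod 12),
        x * y * z = 1 → x ^ 2 = 1 → y ^ 6 = 1 → z ^ 6 = 1 →
        ψ x = 1 ∧ ψ y = 1 ∧ ψ z = 1 := by decide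
    obtain ⟨k1, k2, k3⟩ := key _ _ _ h1 h2 h3 h4
    have hG : ψ.comp F = 1 := by
      apply FreeGroup.ext_hom
      intro a
      fin_cases a <;> simpa using ‹_›
    have hψ : Function.Surjective ψ := by decide
    have hs : Function.Surjective (ψ.comp F) :=
      (hψ.comp hφ).comp (PresentedGroup.mk_surjective _)
    obtain ⟨x, hx⟩ := hs (Multiplicative.ofAdd 1)
    rw [hG] at hx
    simp only [MonoidHom.one_apply] at hx
    exact absurd hx (by decide)
  · intro φ hφ
    set F := φ.comp (PresentedGroup.mk relsS2223) with hFdef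
    set ψ := castM 2 (by norm_num)
    have h1 : F (FreeGroup.of 0 * FreeGroup.of 1 * FreeGroup.of 2 * FreeGroup.of 3) = 1 := by
      simp [hFdef, mk_rel_eq_one (show _ ∈ relsS2223 by left; rfl)]
    have h2 : F ((FreeGroup.of 0) ^ 2) = 1 := by
      simp [hFdef, mk_rel_eq_one (show _ ∈ relsS2223 by right; left; rfl)]
    have h3 : F ((FreeGroup.of 1) ^ 2) = 1 := by
      simp [hFdef, mk_rel_eq_one (show _ ∈ relsS2223 by right; right; left; rfl)]
    have h4 : F ((FreeGroup.of 2) ^ 2) = 1 := by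
      simp [hFdef, mk_rel_eq_one (show _ ∈ relsS2223 by right; right; right; left; rfl)]
    have h5 : F ((FreeGroup.of 3) ^ 3) = 1 := by
      simp [hFdef, mk_rel_eq_one (show _ ∈ relsS2223 by right; right; right; right; rfl)]
    rw [map_mul, map_mul, map_mul] at h1
    rw [map_pow] at h2 h3 h4 h5
    have key : ∀ w x y z : Multiplicative (ZMod 12),
        w * x * y * z = 1 → w ^ 2 = 1 → x ^ 2 = 1 → y ^ 2 = 1 → z ^ 3 = 1 →
        ψ w = 1 ∧ ψ x = 1 ∧ ψ y = 1 ∧ ψ z = 1 := by decide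
    obtain ⟨k1, k2, k3, k4⟩ := key _ _ _ _ h1 h2 h3 h4 h5
    have hG : ψ.comp F = 1 := by
      apply FreeGroup.ext_hom
      intro a
      fin_cases a <;> simpa using ‹_›
    have hψ : Function.Surjective ψ := by decide
    have hs : Function.Surjective (ψ.comp F) :=
      (hψ.comp hφ).comp (PresentedGroup.mk_surjective _)
    obtain ⟨x, hx⟩ := hs (Multiplicative.ofAdd 1)
    rw [hG] at hx
    simp only [MonoidHom.one_apply] at hx
    exact absurd hx (by decide)
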